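/- arXiv:2207.04101 — 6 statements merged into one kernel-verified Lean document; each statement's English description precedes it below -/
import Mathlib

section
/- Let G be a finite simple graph of order n and size m with 0 ≤ m ≤ n − 1. Then σ(G) = m(m − 1)² holds if and only if G is either an edgeless graph (in the case m = 0) or G consists of the star S_{m+1} together with n − m − 1 isolated vertices (in the case m ≥ 1). -/
/-! For an edge `uv`, the edges at `u` and at `v` share only `uv`, so `d_u + d_v ≤ m + 1`.
Since `(d_u - d_v)² = (d_u + d_v - 2)² - 4 (d_u - 1) (d_v - 1)`, every summand of `σ(G)` is at
most `(m - 1)²`, with equality only if one endpoint has degree `m`. So `σ(G) = m (m - 1)²` forces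
a vertex of degree `m`, which then lies on all `m` edges; conversely, the leaves of such a star
have degree `1`. -/

open Finset
open scoped Classical

/-- The sigma index of a graph: `σ(G) = ∑_{uv ∈ E(G)} (d_u - d_v)²`. -/
noncomputable def sigmaIndex {V : Type*} [Fintype V] (G : SimpleGraph V) : ℤ :=
  ∑ e ∈ G.edgeFinset,
    Sym2.lift ⟨fun u v => ((G.degree u : ℤ) - (G.degree v : ℤ)) ^ 2, fun u v => by ring⟩ e

lemma sq_sub_le_sq_of_add_le {a b M : ℕ} (ha : 0 < a) (hb : 0 < b) (hab : a + b ≤ M + 1) :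
    ((a : ℤ) - b) ^ 2 ≤ ((M : ℤ) - 1) ^ 2 := by
  have hab' : (a : ℤ) + b ≤ M + 1 := by exact_mod_cast hab
  have ha' : (1 : ℤ) ≤ a := by exact_mod_cast ha
  have hb' : (1 : ℤ) ≤ b := by exact_mod_cast hb
  nlinarith [mul_nonneg (sub_nonneg.2 ha') (sub_nonneg.2 hb')]

lemma eq_or_eq_of_sq_sub_eq {a b M : ℕ} (ha : 0 < a) (hb : 0 < b) (hab : a + b ≤ M + 1)
    (h : ((a : ℤ) - b) ^ 2 = ((M : ℤ) - 1) ^ 2) : a = M ∨ b = M := by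
  have hab' : (a : ℤ) + b ≤ M + 1 := by exact_mod_cast hab
  have ha' : (1 : ℤ) ≤ a := by exact_mod_cast ha
  have hb' : (1 : ℤ) ≤ b := by exact_mod_cast hb
  have hsum : (a : ℤ) + b = M + 1 := by
    nlinarith [mul_nonneg (sub_nonneg.2 ha') (sub_nonneg.2 hb')]
  have hprod : ((a : ℤ) - 1) * (b - 1) = 0 := by nlinarith
  rcases mul_eq_zero.1 hprod with h1 | h1 <;> omega

namespace SimpleGraph

variable {V : Type*} [Fintype V] (G : SimpleGraph V)

theorem degree_add_degree_le_card_edgeFinset_add_one {u v : V} (h : G.Adj u v) :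
    G.degree u + G.degree v ≤ #G.edgeFinset + 1 := by
  have hinter : G.incidenceFinset u ∩ G.incidenceFinset v = {s(u, v)} := by
    rw [← coe_inj, coe_inter, coe_incidenceFinset, coe_incidenceFinset,
      G.incidenceSet_inter_incidenceSet_of_adj h, coe_singleton]
  have hunion : G.incidenceFinset u ∪ G.incidenceFinset v ⊆ G.edgeFinset :=
    union_subset (G.incidenceFinset_subset u) (G.incidenceFinset_subset v)
  have := card_union_add_card_inter (G.incidenceFinset u) (G.incidenceFinset v)
  rw [hinter, card_singleton, card_incidenceFinset_eq_degree,
    card_incidenceFinset_eq_degree] at this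
  have := card_le_card hunion
  omega

theorem mem_of_degree_eq_card_edgeFinset {c : V} (hc : G.degree c = #G.edgeFinset) :
    ∀ e ∈ G.edgeFinset, c ∈ e := by
  rw [← card_filter_eq_iff, ← incidenceFinset_eq_filter, card_incidenceFinset_eq_degree, hc]

theorem degree_eq_one_of_forall_mem {c v : V} (hc : ∀ e ∈ G.edgeFinset, c ∈ e) (h : G.Adj c v) :
    G.degree v = 1 := by
  rw [← card_incidenceFinset_eq_degree, card_eq_one]
  refine ⟨s(c, v), eq_singleton_iff_unique_mem.2 ⟨?_, fun e he => ?_⟩⟩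
  · exact (G.mem_incidenceFinset _ _).2 ⟨h, Sym2.mem_mk_right c v⟩
  · rw [mem_incidenceFinset] at he
    exact (Sym2.mem_and_mem_iff h.ne).1 ⟨hc e (mem_edgeFinset.2 he.1), he.2⟩

end SimpleGraph

section SigmaIndex

variable {V : Type*} [Fintype V] (G : SimpleGraph V)

noncomputable def sigmaTerm : Sym2 V → ℤ :=
  Sym2.lift ⟨fun u v => ((G.degree u : ℤ) - (G.degree v : ℤ)) ^ 2, fun u v => by ring⟩

@[simp]
lemma sigmaTerm_mk (u v : V) : sigmaTerm G s(u, v) = ((G.degree u : ℤ) - G.degree v) ^ 2 :=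
  rfl

lemma sigmaIndex_eq_sum_sigmaTerm : sigmaIndex G = ∑ e ∈ G.edgeFinset, sigmaTerm G e :=
  rfl

lemma sigmaTerm_le {e : Sym2 V} (he : e ∈ G.edgeFinset) :
    sigmaTerm G e ≤ ((#G.edgeFinset : ℤ) - 1) ^ 2 := by
  induction e using Sym2.ind with
  | _ u v =>
    have hadj : G.Adj u v := G.mem_edgeFinset.1 he
    exact sq_sub_le_sq_of_add_le hadj.degree_pos_left hadj.degree_pos_right
      (G.degree_add_degree_le_card_edgeFinset_add_one hadj)

lemma exists_degree_eq_card_edgeFinset_of_sigmaTerm_eq {e : Sym2 V} (he : e ∈ G.edgeFinset)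
    (h : sigmaTerm G e = ((#G.edgeFinset : ℤ) - 1) ^ 2) : ∃ c, G.degree c = #G.edgeFinset := by
  induction e using Sym2.ind with
  | _ u v =>
    have hadj : G.Adj u v := G.mem_edgeFinset.1 he
    rcases eq_or_eq_of_sq_sub_eq hadj.degree_pos_left hadj.degree_pos_right
      (G.degree_add_degree_le_card_edgeFinset_add_one hadj) h with h | h
    · exact ⟨u, h⟩
    · exact ⟨v, h⟩

lemma sigmaIndex_eq_iff_forall_sigmaTerm_eq :
    sigmaIndex G = (#G.edgeFinset : ℤ) * ((#G.edgeFinset : ℤ) - 1) ^ 2 ↔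
      ∀ e ∈ G.edgeFinset, sigmaTerm G e = ((#G.edgeFinset : ℤ) - 1) ^ 2 := by
  rw [sigmaIndex_eq_sum_sigmaTerm, ← nsmul_eq_mul, ← sum_const]
  exact sum_eq_sum_iff_of_le fun e he => sigmaTerm_le G he

lemma sigmaTerm_eq_of_forall_mem {c : V} (hc : ∀ e ∈ G.edgeFinset, c ∈ e)
    (hdeg : G.degree c = #G.edgeFinset) {e : Sym2 V} (he : e ∈ G.edgeFinset) :
    sigmaTerm G e = ((#G.edgeFinset : ℤ) - 1) ^ 2 := by
  induction e using Sym2.ind with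
  | _ u v =>
    have h : G.Adj u v := G.mem_edgeFinset.1 he
    rcases Sym2.mem_iff.1 (hc _ he) with rfl | rfl
    · rw [sigmaTerm_mk, hdeg, G.degree_eq_one_of_forall_mem hc h]
      push_cast; ring
    · rw [sigmaTerm_mk, hdeg, G.degree_eq_one_of_forall_mem hc h.symm]
      push_cast; ring

end SigmaIndex

theorem sigma_eq_iff_star_general {V : Type*} [Fintype V] (G : SimpleGraph V)
    (m : ℕ) (hm : G.edgeFinset.card = m) :
    sigmaIndex G = (m : ℤ) * ((m : ℤ) - 1) ^ 2 ↔
      ((m = 0 ∧ ∀ u w : V, ¬ G.Adj u w) ∨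
        (1 ≤ m ∧ ∃ c : V, G.degree c = m ∧ ∀ e ∈ G.edgeFinset, c ∈ e)) := by
  subst hm
  have hempty : #G.edgeFinset = 0 ↔ ∀ u w : V, ¬ G.Adj u w := by
    rw [card_eq_zero, G.edgeFinset_eq_empty, G.eq_bot_iff_forall_not_adj]
  rw [sigmaIndex_eq_iff_forall_sigmaTerm_eq]
  constructor
  · intro h
    rcases (#G.edgeFinset).eq_zero_or_pos with h0 | hpos
    · exact .inl ⟨h0, hempty.1 h0⟩
    · obtain ⟨e, he⟩ := card_pos.1 hpos
      obtain ⟨c, hc⟩ := exists_degree_eq_card_edgeFinset_of_sigmaTerm_eq G he (h e he)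
      exact .inr ⟨hpos, c, hc, G.mem_of_degree_eq_card_edgeFinset hc⟩
  · rintro (⟨h0, -⟩ | ⟨-, c, hdeg, hc⟩)
    · simp [card_eq_zero.1 h0]
    · exact fun e he => sigmaTerm_eq_of_forall_mem G hc hdeg he

/-- If `G` has order `n` and size `m` with `0 ≤ m ≤ n - 1`, then
`σ(G) = m (m - 1)²` if and only if `G` is edgeless (case `m = 0`), or `G` consists of the
star `S_{m+1}` together with `n - m - 1` isolated vertices (case `m ≥ 1`); the latter is
expressed by saying that there is a vertex `c` of degree `m` incident with every edge of `G`. -/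
theorem sigma_eq_iff_star {V : Type*} [Fintype V] (G : SimpleGraph V)
    (n m : ℕ) (hn : Fintype.card V = n) (hm : G.edgeFinset.card = m) (hmn : m ≤ n - 1) :
    sigmaIndex G = (m : ℤ) * ((m : ℤ) - 1) ^ 2 ↔
      ((m = 0 ∧ ∀ u w : V, ¬ G.Adj u w) ∨
        (1 ≤ m ∧ ∃ c : V, G.degree c = m ∧ ∀ e ∈ G.edgeFinset, c ∈ e)) :=
  sigma_eq_iff_star_general G m hm
end

section
/- For n ≥ 4 and 0 ≤ k ≤ n − 2, the sigma index of H_{n,k} equals (n − 1)(n − 2)² − 2k(2n − 5) + k²(k − 1). -/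
open Finset
open scoped Classical

/-- The graph `H_{n,k}`: obtained from the star `S_n` with center `0` (adjacent to all other
vertices) by joining the fixed pendant vertex `1` to the `k` further pendant vertices
`2, …, k + 1`. In particular `H_{n,0} = S_n`. -/
def Hgraph (n k : ℕ) : SimpleGraph (Fin n) :=
  SimpleGraph.fromRel (fun x y => x.val = 0 ∨ (x.val = 1 ∧ 2 ≤ y.val ∧ y.val ≤ k + 1))

/-- For `n ≥ 4` and `0 ≤ k ≤ n - 2`, the sigma index of `H_{n,k}` equals
`(n-1)(n-2)² - 2k(2n-5) + k²(k-1)`. -/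
lemma Hgraph_adj (n k : ℕ) (a b : Fin n) :
    (Hgraph n k).Adj a b ↔ a.val ≠ b.val ∧
      (a.val = 0 ∨ b.val = 0 ∨ (a.val = 1 ∧ 2 ≤ b.val ∧ b.val ≤ k + 1)
        ∨ (b.val = 1 ∧ 2 ≤ a.val ∧ a.val ≤ k + 1)) := by
  simp [Hgraph, SimpleGraph.fromRel_adj, Fin.ext_iff, ne_eq]
  tauto

lemma card_filter_val (n : ℕ) (P : ℕ → Prop) [DecidablePred P] :
    (Finset.univ.filter fun u : Fin n => P u.val).card = ((Finset.range n).filter P).card := by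
  rw [Finset.card_filter, Finset.card_filter, Fin.sum_univ_eq_sum_range (fun i => if P i then 1 else 0)]

lemma Hgraph_degree (n k : ℕ) (hn : 4 ≤ n) (hk : k ≤ n - 2) (v : Fin n) :
    (Hgraph n k).degree v =
      if v.val = 0 then n - 1 else if v.val = 1 then k + 1
      else if v.val ≤ k + 1 then 2 else 1 := by
  classical
  rw [← SimpleGraph.card_neighborFinset_eq_degree]
  have hnb : (Hgraph n k).neighborFinset v = Finset.univ.filter ((Hgraph n k).Adj v) := by
    ext u; simp [SimpleGraph.mem_neighborFinset]
  rw [hnb]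
  rcases Nat.lt_or_ge v.val 2 with hv | hv
  · rcases Nat.lt_or_ge v.val 1 with hv0 | hv1
    · -- v.val = 0
      have hv0' : v.val = 0 := by omega
      have : (Finset.univ.filter ((Hgraph n k).Adj v)) =
          Finset.univ.filter (fun u : Fin n => ¬ u.val = 0) := by
        apply filter_congr; intro u _
        rw [Hgraph_adj]; constructor
        · rintro ⟨h1, _⟩; omega
        · intro h; exact ⟨by omega, Or.inl hv0'⟩
      rw [this, card_filter_val n (fun u => ¬ u = 0)]
      have : ((Finset.range n).filter fun u => ¬ u = 0) = Finset.Ico 1 n := by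
        ext u; simp [Finset.mem_Ico]; omega
      rw [this, Nat.card_Ico]
      simp [hv0']
    · -- v.val = 1
      have hv1' : v.val = 1 := by omega
      have : (Finset.univ.filter ((Hgraph n k).Adj v)) =
          Finset.univ.filter (fun u : Fin n => u.val = 0 ∨ (2 ≤ u.val ∧ u.val ≤ k + 1)) := by
        apply filter_congr; intro u _
        rw [Hgraph_adj]; constructor
        · rintro ⟨h1, h2⟩; omega
        · intro h; refine ⟨by omega, ?_⟩; omega
      rw [this, card_filter_val n (fun u => u = 0 ∨ (2 ≤ u ∧ u ≤ k + 1))]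
      have : ((Finset.range n).filter fun u => u = 0 ∨ (2 ≤ u ∧ u ≤ k + 1)) =
          insert 0 (Finset.Ico 2 (k + 2)) := by
        ext u; simp [Finset.mem_Ico]; omega
      rw [this, Finset.card_insert_of_notMem (by simp), Nat.card_Ico]
      simp [hv1']
  · rcases Nat.lt_or_ge (k+1) v.val with hvk | hvk
    · -- v.val ≥ k+2
      have : (Finset.univ.filter ((Hgraph n k).Adj v)) =
          Finset.univ.filter (fun u : Fin n => u.val = 0) := by
        apply filter_congr; intro u _
        rw [Hgraph_adj]; constructor
        · rintro ⟨h1, h2⟩; omega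
        · intro h; exact ⟨by omega, by omega⟩
      rw [this, card_filter_val n (fun u => u = 0)]
      have hset : ((Finset.range n).filter fun u => u = 0) = {0} := by
        ext u
        simp only [Finset.mem_filter, Finset.mem_range, Finset.mem_singleton]
        omega
      rw [hset, Finset.card_singleton, if_neg (by omega), if_neg (by omega),
        if_neg (by omega)]
    · -- 2 ≤ v.val ≤ k+1
      have : (Finset.univ.filter ((Hgraph n k).Adj v)) =
          Finset.univ.filter (fun u : Fin n => u.val = 0 ∨ u.val = 1) := by
        apply filter_congr; intro u _
        rw [Hgraph_adj]; constructor
        · rintro ⟨h1, h2⟩; omega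
        · intro h; refine ⟨by omega, ?_⟩; omega
      rw [this, card_filter_val n (fun u => u = 0 ∨ u = 1)]
      have hset : ((Finset.range n).filter fun u => u = 0 ∨ u = 1) = {0, 1} := by
        ext u
        simp only [Finset.mem_filter, Finset.mem_range, Finset.mem_insert,
          Finset.mem_singleton]
        omega
      rw [hset, Finset.card_pair (by omega), if_neg (by omega), if_neg (by omega),
        if_pos (by omega)]

theorem sigma_Hgraph (n k : ℕ) (hn : 4 ≤ n) (hk : k ≤ n - 2) :
    sigmaIndex (Hgraph n k) = ((n : ℤ) - 1) * ((n : ℤ) - 2) ^ 2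
      - 2 * (k : ℤ) * (2 * (n : ℤ) - 5) + (k : ℤ) ^ 2 * ((k : ℤ) - 1) := by
  classical
  set G := Hgraph n k with hG
  have h0 : (0 : ℕ) < n := by omega
  have h1 : (1 : ℕ) < n := by omega
  set z : Fin n := ⟨0, h0⟩ with hz
  set o : Fin n := ⟨1, h1⟩ with ho
  set E1 : Finset (Sym2 (Fin n)) := (Finset.univ.erase z).image (fun j => s(z, j)) with hE1
  set E2 : Finset (Sym2 (Fin n)) :=
    ((Finset.univ.filter fun j : Fin n => 2 ≤ j.val ∧ j.val ≤ k + 1).image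
      (fun j => s(o, j))) with hE2
  have hedge : G.edgeFinset = E1 ∪ E2 := by
    ext e
    refine Sym2.ind (fun a b => ?_) e
    simp only [SimpleGraph.mem_edgeFinset, SimpleGraph.mem_edgeSet, hG, Hgraph_adj,
      Finset.mem_union, hE1, hE2, Finset.mem_image, Finset.mem_erase, Finset.mem_filter,
      Finset.mem_univ, true_and, and_true, Sym2.eq_iff, ne_eq]
    constructor
    · rintro ⟨hab, h | h | ⟨ha1, hb⟩ | ⟨hb1, ha⟩⟩
      · exact Or.inl ⟨b, by simp [Fin.ext_iff, hz]; omega, Or.inl ⟨by simp [Fin.ext_iff, hz]; omega, rfl⟩⟩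
      · exact Or.inl ⟨a, by simp [Fin.ext_iff, hz]; omega, Or.inr ⟨by simp [Fin.ext_iff, hz]; omega, rfl⟩⟩
      · exact Or.inr ⟨b, hb, Or.inl ⟨by simp [Fin.ext_iff, ho]; omega, rfl⟩⟩
      · exact Or.inr ⟨a, ha, Or.inr ⟨by simp [Fin.ext_iff, ho]; omega, rfl⟩⟩
    · rintro (⟨j, hj, ⟨hza, hjb⟩ | ⟨hzb, hja⟩⟩ | ⟨j, hj, ⟨hoa, hjb⟩ | ⟨hob, hja⟩⟩) <;>
        simp only [Fin.ext_iff, hz, ho] at * <;> omega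
  have hdisj : Disjoint E1 E2 := by
    rw [Finset.disjoint_left]
    rintro e he1 he2
    simp only [hE1, hE2, Finset.mem_image, Finset.mem_erase, Finset.mem_filter,
      Finset.mem_univ, true_and, and_true] at he1 he2
    obtain ⟨j, hj, rfl⟩ := he1
    obtain ⟨j', hj', heq⟩ := he2
    rw [Sym2.eq_iff] at heq
    rcases heq with ⟨h1', h2'⟩ | ⟨h1', h2'⟩ <;>
      simp only [Fin.ext_iff, hz, ho] at * <;> omega
  have hdeg : ∀ v : Fin n, (G.degree v : ℤ) =
      if v.val = 0 then (n : ℤ) - 1 else if v.val = 1 then (k : ℤ) + 1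
      else if v.val ≤ k + 1 then 2 else 1 := by
    intro v
    rw [hG, Hgraph_degree n k hn hk v]
    split_ifs <;> push_cast <;> omega
  rw [sigmaIndex, hedge, Finset.sum_union hdisj]
  have hinj1 : ∀ x ∈ Finset.univ.erase z, ∀ y ∈ Finset.univ.erase z,
      s(z, x) = s(z, y) → x = y := by
    intro x hx y hy h
    rw [Sym2.eq_iff] at h
    rcases h with ⟨_, h⟩ | ⟨h1', h2'⟩
    · exact h
    · simp only [Finset.mem_erase] at hx hy; exact absurd h1'.symm hy.1
  have hinj2 : ∀ x ∈ (Finset.univ.filter fun j : Fin n => 2 ≤ j.val ∧ j.val ≤ k + 1),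
      ∀ y ∈ (Finset.univ.filter fun j : Fin n => 2 ≤ j.val ∧ j.val ≤ k + 1),
      s(o, x) = s(o, y) → x = y := by
    intro x hx y hy h
    rw [Sym2.eq_iff] at h
    rcases h with ⟨_, h⟩ | ⟨h1', h2'⟩
    · exact h
    · simp only [Finset.mem_filter, Fin.ext_iff, ho] at *; omega
  rw [hE1, hE2, Finset.sum_image hinj1, Finset.sum_image hinj2]
  simp only [Sym2.lift_mk]
  have hdz : (G.degree z : ℤ) = (n : ℤ) - 1 := by rw [hdeg]; simp [hz]
  have hdo : (G.degree o : ℤ) = (k : ℤ) + 1 := by rw [hdeg]; simp [ho]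
  -- second sum
  have hsum2 : ∑ j ∈ (Finset.univ.filter fun j : Fin n => 2 ≤ j.val ∧ j.val ≤ k + 1),
      ((G.degree o : ℤ) - (G.degree j : ℤ)) ^ 2 = (k : ℤ) * ((k : ℤ) - 1) ^ 2 := by
    have hconst : ∀ j ∈ (Finset.univ.filter fun j : Fin n => 2 ≤ j.val ∧ j.val ≤ k + 1),
        ((G.degree o : ℤ) - (G.degree j : ℤ)) ^ 2 = ((k : ℤ) - 1) ^ 2 := by
      intro j hj
      simp only [Finset.mem_filter] at hj
      rw [hdo, hdeg j, if_neg (by omega), if_neg (by omega), if_pos (by omega)]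
      ring
    rw [Finset.sum_congr rfl hconst, Finset.sum_const, nsmul_eq_mul]
    congr 1
    rw [Finset.card_filter]
    rw [Fin.sum_univ_eq_sum_range (fun i => if 2 ≤ i ∧ i ≤ k + 1 then 1 else 0)]
    rw [← Finset.card_filter]
    have : ((Finset.range n).filter fun u => 2 ≤ u ∧ u ≤ k + 1) = Finset.Ico 2 (k + 2) := by
      ext u
      simp only [Finset.mem_filter, Finset.mem_range, Finset.mem_Ico]
      omega
    rw [this, Nat.card_Ico]
    push_cast
    omega
  -- first sum
  have hzero : ((G.degree z : ℤ) - (G.degree z : ℤ)) ^ 2 = 0 := by ring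
  have hsum1 : ∑ j ∈ Finset.univ.erase z,
      ((G.degree z : ℤ) - (G.degree j : ℤ)) ^ 2
      = ((n : ℤ) - (k : ℤ) - 2) ^ 2 + (k : ℤ) * ((n : ℤ) - 3) ^ 2
        + ((n : ℤ) - (k : ℤ) - 2) * ((n : ℤ) - 2) ^ 2 := by
    rw [Finset.sum_erase (f := fun j : Fin n => ((G.degree z : ℤ) - (G.degree j : ℤ)) ^ 2)
      Finset.univ hzero]
    have hrw : ∀ j : Fin n, ((G.degree z : ℤ) - (G.degree j : ℤ)) ^ 2
        = (fun i : ℕ => ((n : ℤ) - 1 - (if i = 0 then (n : ℤ) - 1 else if i = 1 then (k : ℤ) + 1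
            else if i ≤ k + 1 then 2 else 1)) ^ 2) j.val := by
      intro j; rw [hdz, hdeg j]
    rw [Finset.sum_congr rfl (fun j _ => hrw j)]
    rw [Fin.sum_univ_eq_sum_range (fun i : ℕ => ((n : ℤ) - 1 - (if i = 0 then (n : ℤ) - 1
      else if i = 1 then (k : ℤ) + 1 else if i ≤ k + 1 then 2 else 1)) ^ 2)]
    have hr : Finset.range n = Finset.Ico 0 n := by rw [Nat.Ico_zero_eq_range]
    rw [hr, ← Finset.sum_Ico_consecutive _ (by omega : 0 ≤ k + 2) (by omega : k + 2 ≤ n),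
      ← Finset.sum_Ico_consecutive _ (by omega : 0 ≤ 2) (by omega : 2 ≤ k + 2)]
    have hI1 : Finset.Ico 0 2 = ({0, 1} : Finset ℕ) := by decide
    have s1 : ∑ i ∈ Finset.Ico 0 2, ((n : ℤ) - 1 - (if i = 0 then (n : ℤ) - 1
        else if i = 1 then (k : ℤ) + 1 else if i ≤ k + 1 then 2 else 1)) ^ 2
        = ((n : ℤ) - (k : ℤ) - 2) ^ 2 := by
      rw [hI1, Finset.sum_insert (by decide), Finset.sum_singleton]
      norm_num
      ring
    have s2 : ∑ i ∈ Finset.Ico 2 (k + 2), ((n : ℤ) - 1 - (if i = 0 then (n : ℤ) - 1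
        else if i = 1 then (k : ℤ) + 1 else if i ≤ k + 1 then 2 else 1)) ^ 2
        = (k : ℤ) * ((n : ℤ) - 3) ^ 2 := by
      have hconst : ∀ i ∈ Finset.Ico 2 (k + 2), ((n : ℤ) - 1 - (if i = 0 then (n : ℤ) - 1
          else if i = 1 then (k : ℤ) + 1 else if i ≤ k + 1 then 2 else 1)) ^ 2
          = ((n : ℤ) - 3) ^ 2 := by
        intro i hi
        simp only [Finset.mem_Ico] at hi
        rw [if_neg (by omega), if_neg (by omega), if_pos (by omega)]
        ring
      rw [Finset.sum_congr rfl hconst, Finset.sum_const, nsmul_eq_mul, Nat.card_Ico]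
      push_cast
      ring
    have s3 : ∑ i ∈ Finset.Ico (k + 2) n, ((n : ℤ) - 1 - (if i = 0 then (n : ℤ) - 1
        else if i = 1 then (k : ℤ) + 1 else if i ≤ k + 1 then 2 else 1)) ^ 2
        = ((n : ℤ) - (k : ℤ) - 2) * ((n : ℤ) - 2) ^ 2 := by
      have hconst : ∀ i ∈ Finset.Ico (k + 2) n, ((n : ℤ) - 1 - (if i = 0 then (n : ℤ) - 1
          else if i = 1 then (k : ℤ) + 1 else if i ≤ k + 1 then 2 else 1)) ^ 2
          = ((n : ℤ) - 2) ^ 2 := by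
        intro i hi
        simp only [Finset.mem_Ico] at hi
        rw [if_neg (by omega), if_neg (by omega), if_neg (by omega)]
        ring
      rw [Finset.sum_congr rfl hconst, Finset.sum_const, nsmul_eq_mul, Nat.card_Ico]
      have : ((n - (k + 2) : ℕ) : ℤ) = (n : ℤ) - (k : ℤ) - 2 := by omega
      rw [this]
    rw [s1, s2, s3]
  rw [hsum1, hsum2]
  ring
end

section
/- Let G be a finite simple graph of order n containing a vertex v of degree n − 1, and let m' denote the number of edges of the vertex-deleted subgraph G − v. Then σ(G) = (n − 1)(n − 2)² − 4m'(n − 2) + M₁(G − v) + σ(G − v). -/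
open Finset
open scoped Classical

/-- The first Zagreb index of a graph: `M₁(G) = ∑_{v ∈ V(G)} d_v²`. -/
noncomputable def zagrebM1 {V : Type*} [Fintype V] (G : SimpleGraph V) : ℤ :=
  ∑ v : V, (G.degree v : ℤ) ^ 2

/-- Double counting: twice the sum over edges of a symmetric function equals the sum
over ordered adjacent pairs. -/
lemma two_mul_sum_edgeFinset {V : Type*} [Fintype V] (G : SimpleGraph V)
    (f : V → V → ℤ) (hf : ∀ a b, f a b = f b a) :
    2 * ∑ e ∈ G.edgeFinset, Sym2.lift ⟨f, hf⟩ e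
      = ∑ u : V, ∑ w ∈ G.neighborFinset u, f u w := by
  classical
  have step2 : ∑ d : G.Dart, f d.toProd.1 d.toProd.2
      = ∑ e ∈ G.edgeFinset, 2 * Sym2.lift ⟨f, hf⟩ e := by
    rw [← Finset.sum_fiberwise_of_maps_to (s := Finset.univ) (t := G.edgeFinset)
      (g := SimpleGraph.Dart.edge)
      (fun d _ => by rw [SimpleGraph.mem_edgeFinset]; exact d.edge_mem)
      (fun d : G.Dart => f d.toProd.1 d.toProd.2)]
    refine Finset.sum_congr rfl fun e he => ?_
    rw [SimpleGraph.mem_edgeFinset] at he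
    revert he
    refine Sym2.ind (fun a b he => ?_) e
    have hab : G.Adj a b := he
    set d : G.Dart := ⟨(a, b), hab⟩ with hd
    have hfib : (Finset.univ.filter fun d' : G.Dart => d'.edge = s(a, b)) = {d, d.symm} := by
      ext d'
      simp only [Finset.mem_filter, Finset.mem_univ, true_and, Finset.mem_insert,
        Finset.mem_singleton]
      exact SimpleGraph.dart_edge_eq_iff d' d
    rw [hfib, Finset.sum_pair d.symm_ne.symm]
    have h1 : Sym2.lift ⟨f, hf⟩ s(a, b) = f a b := Sym2.lift_mk _ a b
    simp only [hd, SimpleGraph.Dart.symm_toProd, Prod.swap, h1]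
    rw [hf b a]
    ring
  have step1 : ∑ d : G.Dart, f d.toProd.1 d.toProd.2
      = ∑ u : V, ∑ w ∈ G.neighborFinset u, f u w := by
    rw [← Finset.sum_fiberwise Finset.univ (fun d : G.Dart => d.toProd.1)
      (fun d : G.Dart => f d.toProd.1 d.toProd.2)]
    refine Finset.sum_congr rfl fun u _ => ?_
    refine Finset.sum_bij (fun d _ => d.toProd.2) ?_ ?_ ?_ ?_
    · intro d hd
      rw [Finset.mem_filter] at hd
      exact (G.mem_neighborFinset u d.toProd.2).mpr (hd.2 ▸ d.adj)
    · intro d1 hd1 d2 hd2 hsnd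
      rw [Finset.mem_filter] at hd1 hd2
      apply SimpleGraph.Dart.ext
      exact Prod.ext (hd1.2.trans hd2.2.symm) hsnd
    · intro w hw
      rw [SimpleGraph.mem_neighborFinset] at hw
      exact ⟨⟨(u, w), hw⟩, by simp, rfl⟩
    · intro d hd
      rw [Finset.mem_filter] at hd
      rw [hd.2]
  rw [Finset.mul_sum] at *
  rw [← step2, step1]

/-- If `G` has order `n` and contains a vertex `v` of degree `n - 1`, and
`m'` is the number of edges of the vertex-deleted subgraph `G - v`, then
`σ(G) = (n-1)(n-2)² - 4m'(n-2) + M₁(G - v) + σ(G - v)`. -/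
theorem sigma_eq_of_dominating_vertex {V : Type*} [Fintype V] (G : SimpleGraph V) (n : ℕ)
    (hn : Fintype.card V = n) (v : V) (hv : G.degree v = n - 1) (m' : ℕ)
    (hm' : (G.induce ({v}ᶜ : Set V)).edgeFinset.card = m') :
    sigmaIndex G = ((n : ℤ) - 1) * ((n : ℤ) - 2) ^ 2 - 4 * (m' : ℤ) * ((n : ℤ) - 2)
      + zagrebM1 (G.induce ({v}ᶜ : Set V)) + sigmaIndex (G.induce ({v}ᶜ : Set V)) := by
  have hn1 : 1 ≤ n := by
    rw [← hn]
    exact Fintype.card_pos_iff.mpr ⟨v⟩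
  -- v is adjacent to every other vertex
  have hNv : G.neighborFinset v = Finset.univ.erase v := by
    apply Finset.eq_of_subset_of_card_le
    · intro u hu
      rw [SimpleGraph.mem_neighborFinset] at hu
      exact Finset.mem_erase.mpr ⟨hu.ne', Finset.mem_univ u⟩
    · rw [Finset.card_erase_of_mem (Finset.mem_univ v), Finset.card_univ, hn,
        SimpleGraph.card_neighborFinset_eq_degree, hv]
  have hadj : ∀ u : V, u ≠ v → G.Adj v u := fun u hu => by
    rw [← SimpleGraph.mem_neighborFinset, hNv]
    exact Finset.mem_erase.mpr ⟨hu, Finset.mem_univ u⟩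
  have hvdeg : (G.degree v : ℤ) = (n : ℤ) - 1 := by
    rw [hv, Nat.cast_sub hn1, Nat.cast_one]
  have hne : ∀ a : ↥({v}ᶜ : Set V), (a : V) ≠ v :=
    fun a h => a.2 (Set.mem_singleton_iff.mpr h)
  -- neighbors in the induced graph
  have himg : ∀ a : ↥({v}ᶜ : Set V), (G.neighborFinset ↑a).erase v
      = ((G.induce ({v}ᶜ : Set V)).neighborFinset a).image Subtype.val := by
    intro a
    ext w
    constructor
    · intro hw
      rw [Finset.mem_erase, SimpleGraph.mem_neighborFinset] at hw
      obtain ⟨hwv, haw⟩ := hw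
      rw [Finset.mem_image]
      refine ⟨⟨w, Set.mem_compl_singleton_iff.mpr hwv⟩, ?_, rfl⟩
      rw [SimpleGraph.mem_neighborFinset]
      exact haw
    · intro hw
      rw [Finset.mem_image] at hw
      obtain ⟨b, hb, rfl⟩ := hw
      rw [SimpleGraph.mem_neighborFinset] at hb
      rw [Finset.mem_erase, SimpleGraph.mem_neighborFinset]
      exact ⟨hne b, hb⟩
  have hvmem : ∀ a : ↥({v}ᶜ : Set V), v ∈ G.neighborFinset ↑a := by
    intro a
    rw [SimpleGraph.mem_neighborFinset]
    exact (hadj ↑a (hne a)).symm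
  -- degrees in the induced graph
  have hdegW : ∀ a : ↥({v}ᶜ : Set V),
      (G.degree ↑a : ℤ) = ((G.induce ({v}ᶜ : Set V)).degree a : ℤ) + 1 := by
    intro a
    have h1 : (G.neighborFinset ↑a).card = ((G.neighborFinset ↑a).erase v).card + 1 :=
      (Finset.card_erase_add_one (hvmem a)).symm
    have h2 : ((G.neighborFinset ↑a).erase v).card
        = (G.induce ({v}ᶜ : Set V)).degree a := by
      rw [himg a, Finset.card_image_of_injective _ Subtype.val_injective,
        SimpleGraph.card_neighborFinset_eq_degree]
    rw [← SimpleGraph.card_neighborFinset_eq_degree, h1, h2]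
    push_cast
    ring
  -- sums over the erased universe vs sums over the subtype
  have hsubty : ∀ g : V → ℤ,
      ∑ u ∈ Finset.univ.erase v, g u = ∑ a : ↥({v}ᶜ : Set V), g ↑a := by
    intro g
    refine Finset.sum_subtype _ (fun x => ?_) g
    simp [Finset.mem_erase]
  have hone : ∑ _a : ↥({v}ᶜ : Set V), (1 : ℤ) = (n : ℤ) - 1 := by
    rw [← hsubty fun _ => (1 : ℤ)]
    rw [Finset.sum_const, Finset.card_erase_of_mem (Finset.mem_univ v), Finset.card_univ, hn]
    rw [nsmul_eq_mul, Nat.cast_sub hn1]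
    simp
  have hdegsum : ∑ a : ↥({v}ᶜ : Set V), ((G.induce ({v}ᶜ : Set V)).degree a : ℤ)
      = 2 * (m' : ℤ) := by
    have h : ∑ a : ↥({v}ᶜ : Set V), (G.induce ({v}ᶜ : Set V)).degree a = 2 * m' := by
      rw [SimpleGraph.sum_degrees_eq_twice_card_edges, hm']
    exact_mod_cast h
  -- the two double-counting identities
  have hG2 : 2 * sigmaIndex G
      = ∑ u : V, ∑ w ∈ G.neighborFinset u, ((G.degree u : ℤ) - (G.degree w : ℤ)) ^ 2 :=
    two_mul_sum_edgeFinset G _ _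
  have hG'2 : 2 * sigmaIndex (G.induce ({v}ᶜ : Set V))
      = ∑ a : ↥({v}ᶜ : Set V), ∑ b ∈ (G.induce ({v}ᶜ : Set V)).neighborFinset a,
          (((G.induce ({v}ᶜ : Set V)).degree a : ℤ)
            - ((G.induce ({v}ᶜ : Set V)).degree b : ℤ)) ^ 2 :=
    two_mul_sum_edgeFinset (G.induce ({v}ᶜ : Set V)) _ _
  set E : ℤ := ∑ a : ↥({v}ᶜ : Set V),
    (((G.induce ({v}ᶜ : Set V)).degree a : ℤ) - ((n : ℤ) - 2)) ^ 2 with hE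
  -- the sum at v
  have partA : ∑ w ∈ G.neighborFinset v, ((G.degree v : ℤ) - (G.degree w : ℤ)) ^ 2 = E := by
    rw [hNv, hsubty fun w => ((G.degree v : ℤ) - (G.degree w : ℤ)) ^ 2, hE]
    refine Finset.sum_congr rfl fun a _ => ?_
    rw [hvdeg, hdegW a]
    ring
  -- the sum away from v
  have partB : ∑ u ∈ Finset.univ.erase v,
      ∑ w ∈ G.neighborFinset u, ((G.degree u : ℤ) - (G.degree w : ℤ)) ^ 2
      = E + 2 * sigmaIndex (G.induce ({v}ᶜ : Set V)) := by
    rw [hsubty fun u => ∑ w ∈ G.neighborFinset u, ((G.degree u : ℤ) - (G.degree w : ℤ)) ^ 2]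
    have inner : ∀ a : ↥({v}ᶜ : Set V),
        ∑ w ∈ G.neighborFinset ↑a, ((G.degree ↑a : ℤ) - (G.degree w : ℤ)) ^ 2
        = (((G.induce ({v}ᶜ : Set V)).degree a : ℤ) - ((n : ℤ) - 2)) ^ 2
          + ∑ b ∈ (G.induce ({v}ᶜ : Set V)).neighborFinset a,
              (((G.induce ({v}ᶜ : Set V)).degree a : ℤ)
                - ((G.induce ({v}ᶜ : Set V)).degree b : ℤ)) ^ 2 := by
      intro a
      rw [← Finset.sum_erase_add _ _ (hvmem a)]
      have hterm : ((G.degree ↑a : ℤ) - (G.degree v : ℤ)) ^ 2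
          = (((G.induce ({v}ᶜ : Set V)).degree a : ℤ) - ((n : ℤ) - 2)) ^ 2 := by
        rw [hvdeg, hdegW a]; ring
      have hrest : ∑ w ∈ (G.neighborFinset ↑a).erase v,
          ((G.degree ↑a : ℤ) - (G.degree w : ℤ)) ^ 2
          = ∑ b ∈ (G.induce ({v}ᶜ : Set V)).neighborFinset a,
              (((G.induce ({v}ᶜ : Set V)).degree a : ℤ)
                - ((G.induce ({v}ᶜ : Set V)).degree b : ℤ)) ^ 2 := by
        rw [himg a, Finset.sum_image (fun x _ y _ h => Subtype.val_injective h)]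
        refine Finset.sum_congr rfl fun b _ => ?_
        rw [hdegW a, hdegW b]
        ring
      rw [hterm, hrest]
      ring
    rw [Finset.sum_congr rfl fun a _ => inner a, Finset.sum_add_distrib, ← hE, ← hG'2]
  -- assemble
  have key : 2 * sigmaIndex G = 2 * E + 2 * sigmaIndex (G.induce ({v}ᶜ : Set V)) := by
    rw [hG2, ← Finset.sum_erase_add _ _ (Finset.mem_univ v), partA, partB]
    ring
  have hEval : E = ((n : ℤ) - 1) * ((n : ℤ) - 2) ^ 2 - 4 * (m' : ℤ) * ((n : ℤ) - 2)
      + zagrebM1 (G.induce ({v}ᶜ : Set V)) := by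
    have expand : E = ∑ a : ↥({v}ᶜ : Set V),
        (((G.induce ({v}ᶜ : Set V)).degree a : ℤ) ^ 2
          - 2 * ((n : ℤ) - 2) * ((G.induce ({v}ᶜ : Set V)).degree a : ℤ)
          + ((n : ℤ) - 2) ^ 2 * 1) := by
      rw [hE]
      refine Finset.sum_congr rfl fun a _ => ?_
      ring
    rw [expand]
    rw [Finset.sum_add_distrib, Finset.sum_sub_distrib, ← Finset.mul_sum, hdegsum,
      ← Finset.mul_sum, hone]
    have hz : ∑ a : ↥({v}ᶜ : Set V), ((G.induce ({v}ᶜ : Set V)).degree a : ℤ) ^ 2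
        = zagrebM1 (G.induce ({v}ᶜ : Set V)) := by
      unfold zagrebM1
      exact Finset.sum_congr rfl fun _ _ => by congr 2
    rw [← hz]
    ring
  rw [hEval] at key
  linarith
end

section
/- Let G be a finite simple graph and let uv ∈ E(G) be an edge such that d_u ≥ d_v and d_u − d_v = max{ |d_w − d_{w'}| : ww' ∈ E(G) }. Then σ(G) − σ(G − uv) ≤ (d_u − d_v)² + (d_u + d_v − 2)(2(d_u − d_v) − 1). -/
open Finset
open scoped Classical

set_option maxHeartbeats 1600000 in
/-- If `uv` is an edge of `G` with `d_u ≥ d_v` whose degree difference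
`d_u - d_v` equals the maximum of `|d_w - d_{w'}|` over all edges `ww'` of `G`, then
`σ(G) - σ(G - uv) ≤ (d_u - d_v)² + (d_u + d_v - 2)(2(d_u - d_v) - 1)`. -/
theorem sigma_sub_sigma_deleteEdge_le {V : Type*} [Fintype V] (G : SimpleGraph V)
    (u v : V) (huv : G.Adj u v) (hd : G.degree v ≤ G.degree u)
    (hmax : ∀ w w' : V, G.Adj w w' →
      |(G.degree w : ℤ) - (G.degree w' : ℤ)| ≤ (G.degree u : ℤ) - (G.degree v : ℤ)) :
    sigmaIndex G - sigmaIndex (G.deleteEdges {s(u, v)}) ≤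
      ((G.degree u : ℤ) - (G.degree v : ℤ)) ^ 2 +
        ((G.degree u : ℤ) + (G.degree v : ℤ) - 2) *
          (2 * ((G.degree u : ℤ) - (G.degree v : ℤ)) - 1) := by
  classical
  have hne : u ≠ v := G.ne_of_adj huv
  set G' := G.deleteEdges {s(u, v)} with hG'def
  set D : ℤ := (G.degree u : ℤ) - (G.degree v : ℤ) with hD
  set F : Sym2 V → ℤ :=
    Sym2.lift ⟨fun a b => ((G.degree a : ℤ) - (G.degree b : ℤ)) ^ 2, fun a b => by ring⟩
    with hF
  set F' : Sym2 V → ℤ :=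
    Sym2.lift ⟨fun a b => ((G'.degree a : ℤ) - (G'.degree b : ℤ)) ^ 2, fun a b => by ring⟩
    with hF'
  -- neighbor finsets of G'
  have hnu : G'.neighborFinset u = (G.neighborFinset u).erase v := by
    ext w
    simp only [SimpleGraph.mem_neighborFinset, Finset.mem_erase, hG'def,
      SimpleGraph.deleteEdges_adj, Set.mem_singleton_iff, Sym2.eq_iff]
    constructor
    · rintro ⟨h1, h2⟩
      exact ⟨fun h => h2 (Or.inl ⟨trivial, h⟩), h1⟩
    · rintro ⟨h1, h2⟩
      refine ⟨h2, ?_⟩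
      rintro (⟨-, h⟩ | ⟨h, -⟩)
      · exact h1 h
      · exact hne h
  have hnv : G'.neighborFinset v = (G.neighborFinset v).erase u := by
    ext w
    simp only [SimpleGraph.mem_neighborFinset, Finset.mem_erase, hG'def,
      SimpleGraph.deleteEdges_adj, Set.mem_singleton_iff, Sym2.eq_iff]
    constructor
    · rintro ⟨h1, h2⟩
      exact ⟨fun h => h2 (Or.inr ⟨trivial, h⟩), h1⟩
    · rintro ⟨h1, h2⟩
      refine ⟨h2, ?_⟩
      rintro (⟨h, -⟩ | ⟨-, h⟩)
      · exact hne h.symm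
      · exact h1 h
  have hnw : ∀ w, w ≠ u → w ≠ v → G'.neighborFinset w = G.neighborFinset w := by
    intro w hwu hwv
    ext x
    simp only [SimpleGraph.mem_neighborFinset, hG'def, SimpleGraph.deleteEdges_adj,
      Set.mem_singleton_iff, Sym2.eq_iff]
    constructor
    · exact fun h => h.1
    · intro h
      refine ⟨h, ?_⟩
      rintro (⟨h', -⟩ | ⟨h', -⟩)
      · exact hwu h'
      · exact hwv h'
  have hdu' : (G'.degree u : ℤ) = (G.degree u : ℤ) - 1 := by
    have hmem : v ∈ G.neighborFinset u := (SimpleGraph.mem_neighborFinset G u v).mpr huv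
    have : G'.degree u + 1 = G.degree u := by
      rw [SimpleGraph.degree, SimpleGraph.degree, hnu,
        Finset.card_erase_of_mem hmem]
      have := Finset.card_pos.mpr ⟨v, hmem⟩
      omega
    push_cast [← this]
    ring
  have hdv' : (G'.degree v : ℤ) = (G.degree v : ℤ) - 1 := by
    have hmem : u ∈ G.neighborFinset v := (SimpleGraph.mem_neighborFinset G v u).mpr huv.symm
    have : G'.degree v + 1 = G.degree v := by
      rw [SimpleGraph.degree, SimpleGraph.degree, hnv,
        Finset.card_erase_of_mem hmem]
      have := Finset.card_pos.mpr ⟨u, hmem⟩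
      omega
    push_cast [← this]
    ring
  have hdw : ∀ w, w ≠ u → w ≠ v → (G'.degree w : ℤ) = (G.degree w : ℤ) := by
    intro w h1 h2
    rw [SimpleGraph.degree, SimpleGraph.degree, hnw w h1 h2]
  -- edge finsets
  have heuv : s(u, v) ∈ G.edgeFinset := SimpleGraph.mem_edgeFinset.mpr huv
  have hE' : G'.edgeFinset = G.edgeFinset.erase s(u, v) := by
    ext e
    simp only [SimpleGraph.mem_edgeFinset, hG'def, SimpleGraph.edgeSet_deleteEdges,
      Set.mem_diff, Set.mem_singleton_iff, Finset.mem_erase, SimpleGraph.mem_edgeFinset]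
    tauto
  set S := G.edgeFinset.erase s(u, v) with hS
  -- split the sums
  have hsg : sigmaIndex G = F s(u, v) + ∑ e ∈ S, F e :=
    (Finset.add_sum_erase _ F heuv).symm
  have hsg' : sigmaIndex G' = ∑ e ∈ S, F' e := by
    rw [sigmaIndex, ← hE']
    exact Finset.sum_congr (by ext; simp only [SimpleGraph.mem_edgeFinset]) (fun x _ => by
      rw [hF']; induction x using Sym2.ind; simp only [Sym2.lift_mk]; congr <;> exact Subsingleton.elim _ _)
  have hFuv : F s(u, v) = D ^ 2 := by
    rw [hF]
    simp [hD]
  -- pointwise bound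
  have key : ∀ e ∈ S, F e - F' e ≤ (if u ∈ e ∨ v ∈ e then 2 * D - 1 else 0) := by
    intro e he
    obtain ⟨hene, heG⟩ := Finset.mem_erase.mp he
    rw [SimpleGraph.mem_edgeFinset] at heG
    induction e with
    | _ a b =>
      have hab : G.Adj a b := heG
      have habne : a ≠ b := G.ne_of_adj hab
      have hmem : (u ∈ s(a, b) ∨ v ∈ s(a, b)) ↔ (a = u ∨ b = u ∨ a = v ∨ b = v) := by
        simp [Sym2.mem_iff]
        tauto
      have hFab : F s(a, b) = ((G.degree a : ℤ) - (G.degree b : ℤ)) ^ 2 := by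
        rw [hF]; simp
      have hF'ab : F' s(a, b) = ((G'.degree a : ℤ) - (G'.degree b : ℤ)) ^ 2 := by
        rw [hF']; simp
      rw [hFab, hF'ab]
      by_cases hau : a = u
      · subst hau
        have hbv : b ≠ v := by
          rintro rfl; exact hene rfl
        have hbu : b ≠ a := habne.symm
        have hb : (G.degree a : ℤ) - (G.degree b : ℤ) ≤ D :=
          le_trans (le_abs_self _) (hmax a b hab)
        rw [if_pos (hmem.mpr (Or.inl rfl)), hdu', hdw b hbu hbv]
        nlinarith [hb]
      · by_cases hav : a = v
        · subst hav
          have hbu : b ≠ u := by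
            rintro rfl
            exact hene (Sym2.eq_swap)
          have hbv : b ≠ a := habne.symm
          have hb : (G.degree a : ℤ) - (G.degree b : ℤ) ≤ D := by
            have := hmax a b hab
            have := le_abs_self ((G.degree a : ℤ) - (G.degree b : ℤ))
            linarith
          rw [if_pos (hmem.mpr (Or.inr (Or.inr (Or.inl rfl)))), hdv', hdw b hbu hbv]
          nlinarith [hb, hd]
        · by_cases hbu : b = u
          · subst hbu
            have hav' : a ≠ v := hav
            have hb : (G.degree b : ℤ) - (G.degree a : ℤ) ≤ D :=
              le_trans (le_abs_self _) (hmax b a hab.symm)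
            rw [if_pos (hmem.mpr (Or.inr (Or.inl rfl))), hdu', hdw a hau hav']
            nlinarith [hb]
          · by_cases hbv : b = v
            · subst hbv
              have hb : (G.degree b : ℤ) - (G.degree a : ℤ) ≤ D :=
                le_trans (le_abs_self _) (hmax b a hab.symm)
              rw [if_pos (hmem.mpr (Or.inr (Or.inr (Or.inr rfl)))), hdv', hdw a hau hav]
              nlinarith [hb]
            · rw [hdw a hau hav, hdw b hbu hbv]
              rw [if_neg (by rw [hmem]; tauto)]
              simp
  -- count incident edges
  have hfilter : S.filter (fun e => u ∈ e ∨ v ∈ e) =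
      (G.incidenceFinset u).erase s(u, v) ∪ (G.incidenceFinset v).erase s(u, v) := by
    ext e
    simp only [Finset.mem_filter, hS, Finset.mem_erase, Finset.mem_union,
      SimpleGraph.mem_incidenceFinset, SimpleGraph.incidenceSet,
      Set.mem_setOf_eq, SimpleGraph.mem_edgeFinset, Set.mem_sep_iff]
    tauto
  have hdisj : Disjoint ((G.incidenceFinset u).erase s(u, v))
      ((G.incidenceFinset v).erase s(u, v)) := by
    rw [Finset.disjoint_left]
    intro e he1 he2
    obtain ⟨hne1, h1⟩ := Finset.mem_erase.mp he1
    obtain ⟨-, h2⟩ := Finset.mem_erase.mp he2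
    rw [SimpleGraph.mem_incidenceFinset] at h1 h2
    exact hne1 ((Sym2.mem_and_mem_iff hne).mp ⟨h1.2, h2.2⟩)
  have hmemu : s(u, v) ∈ G.incidenceFinset u := by
    rw [SimpleGraph.mem_incidenceFinset]
    exact ⟨huv, Sym2.mem_mk_left u v⟩
  have hmemv : s(u, v) ∈ G.incidenceFinset v := by
    rw [SimpleGraph.mem_incidenceFinset]
    exact ⟨huv, Sym2.mem_mk_right u v⟩
  have hdupos : 1 ≤ G.degree u := by
    have : 0 < G.degree u := G.degree_pos_iff_exists_adj u |>.mpr ⟨v, huv⟩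
    omega
  have hdvpos : 1 ≤ G.degree v := by
    have : 0 < G.degree v := G.degree_pos_iff_exists_adj v |>.mpr ⟨u, huv.symm⟩
    omega
  have hcard : ((S.filter (fun e => u ∈ e ∨ v ∈ e)).card : ℤ) =
      (G.degree u : ℤ) + (G.degree v : ℤ) - 2 := by
    rw [hfilter, Finset.card_union_of_disjoint hdisj,
      Finset.card_erase_of_mem hmemu, Finset.card_erase_of_mem hmemv,
      SimpleGraph.card_incidenceFinset_eq_degree, SimpleGraph.card_incidenceFinset_eq_degree]
    push_cast [Nat.cast_sub hdupos, Nat.cast_sub hdvpos]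
    ring
  -- main chain
  have hmain : ∑ e ∈ S, (F e - F' e) ≤ ((G.degree u : ℤ) + (G.degree v : ℤ) - 2) * (2 * D - 1) := by
    calc ∑ e ∈ S, (F e - F' e)
        ≤ ∑ e ∈ S, (if u ∈ e ∨ v ∈ e then 2 * D - 1 else 0) := Finset.sum_le_sum key
      _ = ∑ e ∈ S.filter (fun e => u ∈ e ∨ v ∈ e), (2 * D - 1) := (Finset.sum_filter _ _).symm
      _ = ((S.filter (fun e => u ∈ e ∨ v ∈ e)).card : ℤ) * (2 * D - 1) := by
          rw [Finset.sum_const, nsmul_eq_mul]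
      _ = ((G.degree u : ℤ) + (G.degree v : ℤ) - 2) * (2 * D - 1) := by rw [hcard]
  have : sigmaIndex G - sigmaIndex G' = D ^ 2 + ∑ e ∈ S, (F e - F' e) := by
    rw [hsg, hsg', hFuv, Finset.sum_sub_distrib]
    ring
  rw [this]
  linarith [hmain]
end

section
/- Let G be a finite simple graph of order n and size m with 2 ≤ m ≤ n − 1, and let uv ∈ E(G) be an edge such that d_u ≥ d_v and d_u − d_v = max{ |d_w − d_{w'}| : ww' ∈ E(G) }. Then σ(G) − σ(G − uv) ≤ (m − 1)² + (m − 1)(2m − 3). -/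
open Finset
open scoped Classical

set_option maxHeartbeats 1000000 in
/-- If `G` has order `n` and size `m` with `2 ≤ m ≤ n - 1`, and `uv` is an
edge of `G` with `d_u ≥ d_v` whose degree difference `d_u - d_v` equals the maximum of
`|d_w - d_{w'}|` over all edges `ww'` of `G`, then
`σ(G) - σ(G - uv) ≤ (m - 1)² + (m - 1)(2m - 3)`. -/
theorem sigma_sub_sigma_deleteEdge_le_of_size {V : Type*} [Fintype V] (G : SimpleGraph V)
    (n m : ℕ) (hn : Fintype.card V = n) (hm : G.edgeFinset.card = m)
    (hm2 : 2 ≤ m) (hmn : m ≤ n - 1)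
    (u v : V) (huv : G.Adj u v) (hd : G.degree v ≤ G.degree u)
    (hmax : ∀ w w' : V, G.Adj w w' →
      |(G.degree w : ℤ) - (G.degree w' : ℤ)| ≤ (G.degree u : ℤ) - (G.degree v : ℤ)) :
    sigmaIndex G - sigmaIndex (G.deleteEdges {s(u, v)}) ≤
      ((m : ℤ) - 1) ^ 2 + ((m : ℤ) - 1) * (2 * (m : ℤ) - 3) := by
  classical
  have hne : u ≠ v := G.ne_of_adj huv
  set G' := G.deleteEdges {s(u, v)} with hG'def
  -- edge set of G'
  have hE : G'.edgeFinset = G.edgeFinset.erase s(u, v) := by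
    ext e
    simp only [SimpleGraph.mem_edgeFinset, hG'def, SimpleGraph.edgeSet_deleteEdges,
      Set.mem_diff, Set.mem_singleton_iff, Finset.mem_erase, SimpleGraph.mem_edgeFinset]
    tauto
  -- neighbor finsets of G'
  have hNu : G'.neighborFinset u = (G.neighborFinset u).erase v := by
    ext b
    simp only [SimpleGraph.mem_neighborFinset, hG'def, SimpleGraph.deleteEdges_adj,
      Set.mem_singleton_iff, Finset.mem_erase, Sym2.eq_iff, hne]
    tauto
  have hNv : G'.neighborFinset v = (G.neighborFinset v).erase u := by
    ext b
    simp only [SimpleGraph.mem_neighborFinset, hG'def, SimpleGraph.deleteEdges_adj,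
      Set.mem_singleton_iff, Finset.mem_erase, Sym2.eq_iff, hne, Ne.symm hne]
    tauto
  have hNw : ∀ w : V, w ≠ u → w ≠ v → G'.degree w = G.degree w := by
    intro w hwu hwv
    unfold SimpleGraph.degree
    congr 1
    ext b
    simp only [SimpleGraph.mem_neighborFinset, hG'def, SimpleGraph.deleteEdges_adj,
      Set.mem_singleton_iff, Sym2.eq_iff, hwu, hwv]
    tauto
  have hvmem : v ∈ G.neighborFinset u := by simpa using huv
  have humem : u ∈ G.neighborFinset v := by simpa using huv.symm
  have hdu1 : 1 ≤ G.degree u := Finset.card_pos.mpr ⟨v, hvmem⟩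
  have hdv1 : 1 ≤ G.degree v := Finset.card_pos.mpr ⟨u, humem⟩
  have hdu' : (G'.degree u : ℤ) = (G.degree u : ℤ) - 1 := by
    unfold SimpleGraph.degree
    rw [hNu, Finset.card_erase_of_mem hvmem]
    have := hdu1
    unfold SimpleGraph.degree at this
    push_cast [Nat.cast_sub this]
    ring
  have hdv' : (G'.degree v : ℤ) = (G.degree v : ℤ) - 1 := by
    unfold SimpleGraph.degree
    rw [hNv, Finset.card_erase_of_mem humem]
    have := hdv1
    unfold SimpleGraph.degree at this
    push_cast [Nat.cast_sub this]
    ring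
  -- degree bound
  have hdum : G.degree u ≤ m := by
    rw [← hm, ← SimpleGraph.card_incidenceFinset_eq_degree]
    apply Finset.card_le_card
    intro e he
    rw [SimpleGraph.mem_incidenceFinset, SimpleGraph.incidenceSet] at he
    exact SimpleGraph.mem_edgeFinset.mpr he.1
  have hduM : (G.degree u : ℤ) ≤ (m : ℤ) := by exact_mod_cast hdum
  have hdvZ : (1 : ℤ) ≤ (G.degree v : ℤ) := by exact_mod_cast hdv1
  have hmZ : (2 : ℤ) ≤ (m : ℤ) := by exact_mod_cast hm2
  have hmem : s(u, v) ∈ G.edgeFinset := SimpleGraph.mem_edgeFinset.mpr huv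
  set f : Sym2 V → ℤ := fun e =>
    Sym2.lift ⟨fun a b => ((G.degree a : ℤ) - (G.degree b : ℤ)) ^ 2, fun a b => by ring⟩ e with hf
  set f' : Sym2 V → ℤ := fun e =>
    Sym2.lift ⟨fun a b => ((G'.degree a : ℤ) - (G'.degree b : ℤ)) ^ 2, fun a b => by ring⟩ e with hf'
  have hσ : sigmaIndex G = f s(u, v) + ∑ e ∈ G.edgeFinset.erase s(u, v), f e :=
    (Finset.add_sum_erase _ f hmem).symm
  have hσ' : sigmaIndex G' = ∑ e ∈ G.edgeFinset.erase s(u, v), f' e := by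
    rw [sigmaIndex]
    exact Finset.sum_congr (by convert hE) (fun e _ => by
      rw [hf']; induction e using Sym2.ind; simp only [Sym2.lift_mk]; congr <;> exact Subsingleton.elim _ _)
  -- termwise bound
  have key : ∀ e ∈ G.edgeFinset.erase s(u, v), f e - f' e ≤ 2 * (m : ℤ) - 3 := by
    intro e he
    obtain ⟨hne', heE⟩ := Finset.mem_erase.mp he
    rw [SimpleGraph.mem_edgeFinset] at heE
    induction e using Sym2.ind with
    | _ a b =>
      rw [SimpleGraph.mem_edgeSet] at heE
      have hab : a ≠ b := heE.ne
      simp only [hf, hf', Sym2.lift_mk]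
      by_cases hau : a = u
      · subst hau
        have hbv : b ≠ v := fun h => hne' (by rw [h])
        have hdb : G'.degree b = G.degree b := hNw b hab.symm hbv
        rw [hdu', hdb]
        have habs := abs_le.mp (hmax a b heE)
        nlinarith [habs.1, habs.2, hduM, hdvZ]
      · by_cases hav : a = v
        · subst hav
          have hbu : b ≠ u := fun h => hne' (by rw [h]; exact Sym2.eq_swap)
          have hdb : G'.degree b = G.degree b := hNw b hbu hab.symm
          rw [hdv', hdb]
          have habs := abs_le.mp (hmax a b heE)
          nlinarith [habs.1, habs.2, hduM, hdvZ, hd]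
        · by_cases hbu : b = u
          · subst hbu
            have hda : G'.degree a = G.degree a := hNw a hau hav
            rw [hdu', hda]
            have habs := abs_le.mp (hmax a b heE)
            nlinarith [habs.1, habs.2, hduM, hdvZ]
          · by_cases hbv : b = v
            · subst hbv
              have hda : G'.degree a = G.degree a := hNw a hau hav
              rw [hdv', hda]
              have habs := abs_le.mp (hmax a b heE)
              nlinarith [habs.1, habs.2, hduM, hdvZ, hd]
            · have hda : G'.degree a = G.degree a := hNw a hau hav
              have hdb : G'.degree b = G.degree b := hNw b hbu hbv
              rw [hda, hdb]
              linarith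
  have hcard : (G.edgeFinset.erase s(u, v)).card = m - 1 := by
    rw [Finset.card_erase_of_mem hmem, hm]
  have hsum : ∑ e ∈ G.edgeFinset.erase s(u, v), (f e - f' e) ≤
      ((m : ℤ) - 1) * (2 * (m : ℤ) - 3) := by
    calc ∑ e ∈ G.edgeFinset.erase s(u, v), (f e - f' e)
        ≤ (G.edgeFinset.erase s(u, v)).card • (2 * (m : ℤ) - 3) :=
          Finset.sum_le_card_nsmul _ _ _ key
      _ = ((m : ℤ) - 1) * (2 * (m : ℤ) - 3) := by
          rw [hcard, nsmul_eq_mul, Nat.cast_sub (by omega : 1 ≤ m) ]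
          · push_cast; ring
  have hfuv : f s(u, v) ≤ ((m : ℤ) - 1) ^ 2 := by
    simp only [hf, Sym2.lift_mk]
    have habs := abs_le.mp (hmax u v huv)
    nlinarith [hduM, hdvZ, hd]
  have := Finset.sum_sub_distrib (s := G.edgeFinset.erase s(u, v)) (f := f) (g := f')
  rw [hσ, hσ']
  linarith [hsum, hfuv, this]
end

section
/- Let G be a finite simple graph and let uv ∈ E(G) be an edge with d_u ≥ d_v. Set Z = N(u) ∩ N(v), X = N(u) \ (Z ∪ {v}), and Y = N(v) \ (Z ∪ {u}). Then σ(G) − σ(G − uv) = (d_u − d_v)² + Σ_{x ∈ X} [2(d_u − d_x) − 1] + Σ_{y ∈ Y} [2(d_v − d_y) − 1] + 2 Σ_{z ∈ Z} [(d_u − d_z) + (d_v − d_z) − 1], where all degrees refer to degrees in G. -/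
open Finset
open scoped Classical

/-- For an edge `uv` of `G` with `d_u ≥ d_v`, setting `Z = N(u) ∩ N(v)`,
`X = N(u) \ (Z ∪ {v})` and `Y = N(v) \ (Z ∪ {u})`, one has
`σ(G) - σ(G - uv) = (d_u - d_v)² + ∑_{x ∈ X} (2(d_u - d_x) - 1) + ∑_{y ∈ Y} (2(d_v - d_y) - 1)
+ 2 ∑_{z ∈ Z} ((d_u - d_z) + (d_v - d_z) - 1)`, all degrees taken in `G`. -/
theorem sigma_sub_sigma_deleteEdge_eq {V : Type*} [Fintype V] (G : SimpleGraph V)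
    (u v : V) (huv : G.Adj u v) (hd : G.degree v ≤ G.degree u) :
    sigmaIndex G - sigmaIndex (G.deleteEdges {s(u, v)}) =
      ((G.degree u : ℤ) - (G.degree v : ℤ)) ^ 2
      + ∑ x ∈ G.neighborFinset u \ ((G.neighborFinset u ∩ G.neighborFinset v) ∪ {v}),
          (2 * ((G.degree u : ℤ) - (G.degree x : ℤ)) - 1)
      + ∑ y ∈ G.neighborFinset v \ ((G.neighborFinset u ∩ G.neighborFinset v) ∪ {u}),
          (2 * ((G.degree v : ℤ) - (G.degree y : ℤ)) - 1)
      + 2 * ∑ z ∈ G.neighborFinset u ∩ G.neighborFinset v,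
          (((G.degree u : ℤ) - (G.degree z : ℤ)) + ((G.degree v : ℤ) - (G.degree z : ℤ)) - 1) := by
  classical
  have hne : u ≠ v := huv.ne
  set G' := G.deleteEdges {s(u, v)} with hG'
  set φ : SimpleGraph V → Sym2 V → ℤ := fun H =>
    Sym2.lift ⟨fun a b => ((H.degree a : ℤ) - (H.degree b : ℤ)) ^ 2, fun a b => by ring⟩
    with hφ
  have hsig : ∀ H : SimpleGraph V, sigmaIndex H = ∑ e ∈ H.edgeFinset, φ H e := fun H => rfl
  have hadj : ∀ a b : V, G'.Adj a b ↔ G.Adj a b ∧ s(a, b) ≠ s(u, v) := by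
    intro a b
    simp [hG', SimpleGraph.deleteEdges_adj]
  -- neighbor finsets of G'
  have h_nf : ∀ w : V, w ≠ u → w ≠ v → G'.neighborFinset w = G.neighborFinset w := by
    intro w hwu hwv
    ext a
    simp only [SimpleGraph.mem_neighborFinset, hadj, ne_eq, Sym2.eq_iff, not_or]
    tauto
  have h_nfu : G'.neighborFinset u = (G.neighborFinset u).erase v := by
    ext a
    simp only [SimpleGraph.mem_neighborFinset, hadj, ne_eq, Sym2.eq_iff, not_or,
      Finset.mem_erase]
    tauto
  have h_nfv : G'.neighborFinset v = (G.neighborFinset v).erase u := by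
    ext a
    simp only [SimpleGraph.mem_neighborFinset, hadj, ne_eq, Sym2.eq_iff, not_or,
      Finset.mem_erase]
    tauto
  have hdegw : ∀ w : V, w ≠ u → w ≠ v → (G'.degree w : ℤ) = (G.degree w : ℤ) := by
    intro w hwu hwv
    rw [SimpleGraph.degree, SimpleGraph.degree, h_nf w hwu hwv]
  have hvmem : v ∈ G.neighborFinset u := by
    simpa using huv
  have humem : u ∈ G.neighborFinset v := by
    simpa using huv.symm
  have hdu : (G'.degree u : ℤ) = (G.degree u : ℤ) - 1 := by
    rw [SimpleGraph.degree, SimpleGraph.degree, h_nfu, Finset.card_erase_of_mem hvmem]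
    have h1 : 0 < (G.neighborFinset u).card := Finset.card_pos.mpr ⟨v, hvmem⟩
    omega
  have hdv : (G'.degree v : ℤ) = (G.degree v : ℤ) - 1 := by
    rw [SimpleGraph.degree, SimpleGraph.degree, h_nfv, Finset.card_erase_of_mem humem]
    have h1 : 0 < (G.neighborFinset v).card := Finset.card_pos.mpr ⟨u, humem⟩
    omega
  have hdegw' : ∀ (w : V) (i : Fintype (G'.neighborSet w)), w ≠ u → w ≠ v →
      (@SimpleGraph.degree V G' w i : ℤ) = (G.degree w : ℤ) := by
    intro w i hwu hwv
    rw [← hdegw w hwu hwv]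
    congr!
  have hdu' : ∀ i : Fintype (G'.neighborSet u),
      (@SimpleGraph.degree V G' u i : ℤ) = (G.degree u : ℤ) - 1 := by
    intro i
    rw [← hdu]
    congr!
  have hdv' : ∀ i : Fintype (G'.neighborSet v),
      (@SimpleGraph.degree V G' v i : ℤ) = (G.degree v : ℤ) - 1 := by
    intro i
    rw [← hdv]
    congr!
  -- edge finset of G'
  have hE : G'.edgeFinset = G.edgeFinset.erase s(u, v) := by
    ext e
    simp [hG', SimpleGraph.edgeSet_deleteEdges, Finset.mem_erase, and_comm]
  have hE' : ∀ i : Fintype G'.edgeSet,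
      @SimpleGraph.edgeFinset V G' i = G.edgeFinset.erase s(u, v) := by
    intro i
    rw [← hE]
    congr!
  have hmem : s(u, v) ∈ G.edgeFinset := by
    simpa using huv
  have key : sigmaIndex G - sigmaIndex G' =
      φ G s(u, v) + ∑ e ∈ G.edgeFinset.erase s(u, v), (φ G e - φ G' e) := by
    rw [hsig G, hsig G', hE' _, Finset.sum_sub_distrib,
      ← Finset.add_sum_erase _ (φ G) hmem]
    ring
  set A := ((G.neighborFinset u).erase v).image (fun w => s(u, w)) with hA
  set B := ((G.neighborFinset v).erase u).image (fun w => s(v, w)) with hB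
  have hsub : A ∪ B ⊆ G.edgeFinset.erase s(u, v) := by
    intro e he
    rcases Finset.mem_union.mp he with h | h
    · obtain ⟨w, hw, rfl⟩ := Finset.mem_image.mp h
      obtain ⟨hwv, hwadj⟩ := Finset.mem_erase.mp hw
      rw [SimpleGraph.mem_neighborFinset] at hwadj
      refine Finset.mem_erase.mpr ⟨?_, by simpa using hwadj⟩
      intro h
      rw [Sym2.eq_iff] at h
      rcases h with ⟨-, h2⟩ | ⟨h1, -⟩
      · exact hwv h2
      · exact hne h1
    · obtain ⟨w, hw, rfl⟩ := Finset.mem_image.mp h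
      obtain ⟨hwu, hwadj⟩ := Finset.mem_erase.mp hw
      rw [SimpleGraph.mem_neighborFinset] at hwadj
      refine Finset.mem_erase.mpr ⟨?_, by simpa using hwadj⟩
      intro h
      rw [Sym2.eq_iff] at h
      rcases h with ⟨h1, -⟩ | ⟨-, h2⟩
      · exact hne h1.symm
      · exact hwu h2
  have hzero : ∀ e ∈ G.edgeFinset.erase s(u, v), e ∉ A ∪ B → φ G e - φ G' e = 0 := by
    intro e
    induction e using Sym2.ind with
    | _ a b =>
      intro he hn
      obtain ⟨hene, hab'⟩ := Finset.mem_erase.mp he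
      have hab : G.Adj a b := by simpa using hab'
      rw [Finset.mem_union, not_or] at hn
      obtain ⟨hnA, hnB⟩ := hn
      have haux : ∀ c d : V, G.Adj c d → s(c, d) ≠ s(u, v) → s(c, d) ∉ A →
          s(c, d) ∉ B → c ≠ u ∧ c ≠ v := by
        intro c d hcd hcd_ne hcA hcB
        constructor
        · rintro rfl
          have hdv : d ≠ v := by
            rintro rfl; exact hcd_ne rfl
          exact hcA (Finset.mem_image.mpr ⟨d, Finset.mem_erase.mpr
            ⟨hdv, by simpa using hcd⟩, rfl⟩)
        · rintro rfl
          have hdu : d ≠ u := by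
            rintro rfl
            exact hcd_ne (Sym2.eq_swap)
          exact hcB (Finset.mem_image.mpr ⟨d, Finset.mem_erase.mpr
            ⟨hdu, by simpa using hcd⟩, rfl⟩)
      have hswap : s(b, a) = s(a, b) := Sym2.eq_swap
      obtain ⟨hau, hav⟩ := haux a b hab hene hnA hnB
      obtain ⟨hbu, hbv⟩ := haux b a hab.symm (by rw [hswap]; exact hene)
        (by rw [hswap]; exact hnA) (by rw [hswap]; exact hnB)
      simp only [hφ, Sym2.lift_mk]
      rw [hdegw' a _ hau hav, hdegw' b _ hbu hbv]
      ring
  have hdisj : Disjoint A B := by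
    rw [Finset.disjoint_left]
    intro e heA heB
    obtain ⟨w, hw, rfl⟩ := Finset.mem_image.mp heA
    obtain ⟨w', hw', heq⟩ := Finset.mem_image.mp heB
    obtain ⟨hwv, -⟩ := Finset.mem_erase.mp hw
    obtain ⟨hwu, -⟩ := Finset.mem_erase.mp hw'
    rw [Sym2.eq_iff] at heq
    rcases heq with ⟨rfl, -⟩ | ⟨rfl, -⟩ <;> simp_all
  have hsumsplit : ∑ e ∈ G.edgeFinset.erase s(u, v), (φ G e - φ G' e)
      = ∑ e ∈ A, (φ G e - φ G' e) + ∑ e ∈ B, (φ G e - φ G' e) := by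
    rw [← Finset.sum_union hdisj]
    exact (Finset.sum_subset hsub hzero).symm
  have hsumA : ∑ e ∈ A, (φ G e - φ G' e)
      = ∑ w ∈ (G.neighborFinset u).erase v, (2 * ((G.degree u : ℤ) - (G.degree w : ℤ)) - 1) := by
    rw [hA, Finset.sum_image]
    · refine Finset.sum_congr rfl fun w hw => ?_
      obtain ⟨hwv, hwadj⟩ := Finset.mem_erase.mp hw
      rw [SimpleGraph.mem_neighborFinset] at hwadj
      have hwu : w ≠ u := hwadj.ne'
      simp only [hφ, Sym2.lift_mk]
      rw [hdu' _, hdegw' w _ hwu hwv]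
      ring
    · intro x hx y hy hxy
      rw [Sym2.eq_iff] at hxy
      rcases hxy with ⟨-, h⟩ | ⟨h1, h2⟩
      · exact h
      · exact h2.trans h1
  have hsumB : ∑ e ∈ B, (φ G e - φ G' e)
      = ∑ w ∈ (G.neighborFinset v).erase u, (2 * ((G.degree v : ℤ) - (G.degree w : ℤ)) - 1) := by
    rw [hB, Finset.sum_image]
    · refine Finset.sum_congr rfl fun w hw => ?_
      obtain ⟨hwu, hwadj⟩ := Finset.mem_erase.mp hw
      rw [SimpleGraph.mem_neighborFinset] at hwadj
      have hwv : w ≠ v := hwadj.ne'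
      simp only [hφ, Sym2.lift_mk]
      rw [hdv' _, hdegw' w _ hwu hwv]
      ring
    · intro x hx y hy hxy
      rw [Sym2.eq_iff] at hxy
      rcases hxy with ⟨-, h⟩ | ⟨h1, h2⟩
      · exact h
      · exact h2.trans h1
  -- split the neighbor sums into X/Y and Z
  set Z := G.neighborFinset u ∩ G.neighborFinset v with hZ
  have hXZ : (G.neighborFinset u).erase v
      = (G.neighborFinset u \ (Z ∪ {v})) ∪ Z := by
    ext a
    simp only [Finset.mem_erase, Finset.mem_union, Finset.mem_sdiff, Finset.mem_singleton,
      hZ, Finset.mem_inter]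
    constructor
    · rintro ⟨hav, ha⟩
      by_cases hz : a ∈ G.neighborFinset v
      · exact Or.inr ⟨ha, hz⟩
      · refine Or.inl ⟨ha, ?_⟩
        push_neg
        exact ⟨fun _ => hz, hav⟩
    · rintro (⟨ha, hn⟩ | ⟨ha, hav⟩)
      · push_neg at hn
        exact ⟨hn.2, ha⟩
      · refine ⟨?_, ha⟩
        intro h
        rw [h, SimpleGraph.mem_neighborFinset] at hav
        exact G.loopless.irrefl v hav
  have hYZ : (G.neighborFinset v).erase u
      = (G.neighborFinset v \ (Z ∪ {u})) ∪ Z := by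
    ext a
    simp only [Finset.mem_erase, Finset.mem_union, Finset.mem_sdiff, Finset.mem_singleton,
      hZ, Finset.mem_inter]
    constructor
    · rintro ⟨hau, ha⟩
      by_cases hz : a ∈ G.neighborFinset u
      · exact Or.inr ⟨hz, ha⟩
      · refine Or.inl ⟨ha, ?_⟩
        push_neg
        exact ⟨fun h => absurd h hz, hau⟩
    · rintro (⟨ha, hn⟩ | ⟨hau, ha⟩)
      · push_neg at hn
        exact ⟨hn.2, ha⟩
      · refine ⟨?_, ha⟩
        intro h
        rw [h, SimpleGraph.mem_neighborFinset] at hau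
        exact G.loopless.irrefl u hau
  have hdisjX : Disjoint (G.neighborFinset u \ (Z ∪ {v})) Z := by
    rw [Finset.disjoint_left]
    intro a ha haZ
    obtain ⟨-, hn⟩ := Finset.mem_sdiff.mp ha
    exact hn (Finset.mem_union.mpr (Or.inl haZ))
  have hdisjY : Disjoint (G.neighborFinset v \ (Z ∪ {u})) Z := by
    rw [Finset.disjoint_left]
    intro a ha haZ
    obtain ⟨-, hn⟩ := Finset.mem_sdiff.mp ha
    exact hn (Finset.mem_union.mpr (Or.inl haZ))
  have hφuv : φ G s(u, v) = ((G.degree u : ℤ) - (G.degree v : ℤ)) ^ 2 := by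
    simp [hφ, Sym2.lift_mk]
  have hZcomb : ∑ z ∈ Z, (2 * ((G.degree u : ℤ) - (G.degree z : ℤ)) - 1)
      + ∑ z ∈ Z, (2 * ((G.degree v : ℤ) - (G.degree z : ℤ)) - 1)
      = 2 * ∑ z ∈ Z, (((G.degree u : ℤ) - (G.degree z : ℤ))
          + ((G.degree v : ℤ) - (G.degree z : ℤ)) - 1) := by
    rw [Finset.mul_sum, ← Finset.sum_add_distrib]
    exact Finset.sum_congr rfl fun z _ => by ring
  rw [key, hsumsplit, hsumA, hsumB, hXZ, hYZ, Finset.sum_union hdisjX,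
    Finset.sum_union hdisjY, hφuv]
  linarith [hZcomb]
end
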